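/- Let k ≥ 1 and let n₁, …, n_k be positive integers with n_k > 1. Then the denominator (in lowest terms) of the finite continued fraction [0; 1, 1, n₁, …, n_k] is strictly greater than the denominator of [0; 1, n₁, …, n_k, 1]. -/

import Mathlib

open MeasureTheory Filter

noncomputable def gaussMap (x : ℝ) : ℝ := Int.fract x⁻¹

noncomputable def gaussMeasure : Measure ℝ :=
  (volume.restrict (Set.Ioo (0:ℝ) 1)).withDensity
    (fun x => ENNReal.ofReal (1 / ((1 + x) * Real.log 2)))

noncomputable def cfDigit (x : ℝ) (i : ℕ) : ℕ := ⌊(gaussMap^[i] x)⁻¹⌋₊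

def cylinder (w : List ℕ) : Set ℝ :=
  {x | x ∈ Set.Ioo (0:ℝ) 1 ∧ ∀ i < w.length, cfDigit x i = w.getD i 0}

noncomputable def blockCount (x : ℝ) (m : ℕ) (s : List ℕ) (N : ℕ) : ℕ :=
  Nat.card {i : ℕ // i ≤ N ∧ (gaussMap^[m * i] x) ∈ cylinder s}

def CFNormal (x : ℝ) : Prop :=
  ∀ s : List ℕ, s ≠ [] → (∀ a ∈ s, 0 < a) →
    Tendsto (fun n : ℕ => (blockCount x 1 s n : ℝ) / n) atTop
      (nhds (gaussMeasure (cylinder s)).toReal)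

def cfVal : List ℕ → ℚ
  | [] => 0
  | a :: t => 1 / (a + cfVal t)

def cfQ (a : ℕ → ℕ) : ℕ → ℕ
  | 0 => 0
  | 1 => 1
  | (m+2) => a (m+1) * cfQ a (m+1) + cfQ a m

def cfP (a : ℕ → ℕ) : ℕ → ℕ
  | 0 => 1
  | 1 => 0
  | (m+2) => a (m+1) * cfP a (m+1) + cfP a m


/-! The value of `[0; a₁, …, aₘ]` is `p / q` where `(q, p)` is the first column of the product `X`
of the matrices `!![aᵢ, 1; 1, 0]`; the entries of `X` are continuants, and `q` and `p` are coprime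
by the Euclidean step `gcd (a q + p, q) = gcd (p, q)`. If `X` is the product over `n₁, …, n_k`,
the two denominators are `2 X₀₀ + X₁₀` and `X₀₀ + X₀₁ + X₁₀ + X₁₁`, so it suffices that
`X₀₁ + X₁₁ < X₀₀`. Splitting off the last factor `!![n_k, 1; 1, 0]` with `n_k ≥ 2` reduces this
to `Y₁₀ < Y₀₀ + Y₀₁` for the product `Y` over `n₁, …, n_{k-1}`. -/

def cfMatrix (l : List ℕ) : Matrix (Fin 2) (Fin 2) ℕ :=
  (l.map fun a => !![a, 1; 1, 0]).prod

lemma cfMatrix_cons_zero_apply (a : ℕ) (l : List ℕ) (j : Fin 2) :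
    cfMatrix (a :: l) 0 j = a * cfMatrix l 0 j + cfMatrix l 1 j := by
  simp [cfMatrix, Matrix.mul_apply, Fin.sum_univ_two]

lemma cfMatrix_cons_one_apply (a : ℕ) (l : List ℕ) (j : Fin 2) :
    cfMatrix (a :: l) 1 j = cfMatrix l 0 j := by
  simp [cfMatrix, Matrix.mul_apply, Fin.sum_univ_two]

lemma cfMatrix_append_singleton_apply_zero (l : List ℕ) (c : ℕ) (i : Fin 2) :
    cfMatrix (l ++ [c]) i 0 = c * cfMatrix l i 0 + cfMatrix l i 1 := by
  simp [cfMatrix, Matrix.mul_apply, Fin.sum_univ_two, mul_comm]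

lemma cfMatrix_append_singleton_apply_one (l : List ℕ) (c : ℕ) (i : Fin 2) :
    cfMatrix (l ++ [c]) i 1 = cfMatrix l i 0 := by
  simp [cfMatrix, Matrix.mul_apply, Fin.sum_univ_two]

lemma cfMatrix_row_pos (l : List ℕ) : ∀ i, 0 < cfMatrix l i 0 + cfMatrix l i 1 := by
  induction l with
  | nil => simp [Fin.forall_fin_two, cfMatrix]
  | cons a l ih =>
    refine Fin.forall_fin_two.2 ⟨?_, ?_⟩
    · simp only [cfMatrix_cons_zero_apply]
      have := ih 1
      omega
    · simpa only [cfMatrix_cons_one_apply] using ih 0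

lemma cfMatrix_zero_zero_pos {l : List ℕ} (hl : ∀ a ∈ l, 0 < a) : 0 < cfMatrix l 0 0 := by
  induction l with
  | nil => simp [cfMatrix]
  | cons a l ih =>
    rw [cfMatrix_cons_zero_apply]
    have hq := ih fun b hb => hl b (List.mem_cons_of_mem a hb)
    exact Nat.add_pos_left (Nat.mul_pos (hl a List.mem_cons_self) hq) _

lemma cfMatrix_coprime (l : List ℕ) : (cfMatrix l 0 0).Coprime (cfMatrix l 1 0) := by
  induction l with
  | nil => simp [cfMatrix]
  | cons a l ih =>
    rw [cfMatrix_cons_zero_apply, cfMatrix_cons_one_apply, add_comm]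
    exact (Nat.coprime_add_mul_right_left _ _ _).2 ih.symm

lemma cfVal_eq_div {l : List ℕ} (hl : ∀ a ∈ l, 0 < a) :
    cfVal l = (cfMatrix l 1 0 : ℚ) / cfMatrix l 0 0 := by
  induction l with
  | nil => simp [cfVal, cfMatrix]
  | cons a l ih =>
    have hl' : ∀ b ∈ l, 0 < b := fun b hb => hl b (List.mem_cons_of_mem a hb)
    have hq : (cfMatrix l 0 0 : ℚ) ≠ 0 := by exact_mod_cast (cfMatrix_zero_zero_pos hl').ne'
    rw [cfVal, ih hl', cfMatrix_cons_zero_apply, cfMatrix_cons_one_apply]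
    push_cast
    field_simp

lemma den_cfVal {l : List ℕ} (hl : ∀ a ∈ l, 0 < a) : (cfVal l).den = cfMatrix l 0 0 := by
  have h := Rat.den_div_eq_of_coprime (a := cfMatrix l 1 0) (b := cfMatrix l 0 0)
    (by exact_mod_cast cfMatrix_zero_zero_pos hl) (by simpa using (cfMatrix_coprime l).symm)
  rw [cfVal_eq_div hl]
  push_cast at h
  exact_mod_cast h

lemma cfMatrix_one_zero_lt {l : List ℕ} (hl : ∀ a ∈ l, 0 < a) :
    cfMatrix l 1 0 < cfMatrix l 0 0 + cfMatrix l 0 1 := by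
  cases l with
  | nil => simp [cfMatrix]
  | cons a t =>
    have ha := hl a List.mem_cons_self
    have := cfMatrix_row_pos t 1
    simp only [cfMatrix_cons_zero_apply, cfMatrix_cons_one_apply]
    nlinarith

lemma den_cfVal_append_one_lt {l : List ℕ} {c : ℕ} (hl : ∀ a ∈ l, 0 < a) (hc : 2 ≤ c) :
    (cfVal ((1 :: (l ++ [c])) ++ [1])).den < (cfVal (1 :: 1 :: (l ++ [c]))).den := by
  rw [den_cfVal (by grind), den_cfVal (by grind)]
  have := cfMatrix_one_zero_lt hl
  simp only [cfMatrix_cons_zero_apply, cfMatrix_cons_one_apply,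
    cfMatrix_append_singleton_apply_zero, cfMatrix_append_singleton_apply_one]
  nlinarith

theorem denom_compare (k : ℕ) (hk : 1 ≤ k) (n : ℕ → ℕ)
    (hpos : ∀ i, 1 ≤ i → i ≤ k → 0 < n i) (hlast : 1 < n k) :
    (cfVal (1 :: 1 :: List.ofFn (fun i : Fin k => n (i + 1)))).den >
      (cfVal ((1 :: List.ofFn (fun i : Fin k => n (i + 1))) ++ [1])).den := by
  obtain ⟨m, rfl⟩ : ∃ m, k = m + 1 := ⟨k - 1, by omega⟩
  rw [List.ofFn_succ', List.concat_eq_append]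
  refine den_cfVal_append_one_lt ?_ hlast
  simp only [List.mem_ofFn]
  rintro _ ⟨i, rfl⟩
  exact hpos _ (by omega) (by omega)
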